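/- arXiv:hep-th/9211109 — 6 statements merged into one kernel-verified Lean document; each statement's English description precedes it below -/
import Mathlib

section
/- Let n₁ ≥ n₂ ≥ … ≥ n_r be a partition of n with conjugate m_k = #{i : n_i ≥ k} and partial sums s_t = m₁ + … + m_t (s₀ = 0). Define the diagonal n×n matrix δ = Σ_{k≥1} Σ_{j=1}^{m_k} ((Σ_l l·m_l)/(Σ_l m_l) − k) E_{s_{k−1}+j, s_{k−1}+j} over ℚ (or ℂ), and let t₊ = Σ_{l≥1} Σ_{k=1}^{n_l −1} E_{l+s_{k−1}, l+s_k}. Then: (i) [δ, t₊] = t₊; (ii) trace(δ) = 0; (iii) for all indices i, j, the difference δ_{ii} − δ_{jj} is an integer, so that the adjoint action of δ has only integral eigenvalues on the elementary matrices E_{ij} (namely [δ, E_{ij}] = (δ_{ii} − δ_{jj}) E_{ij} with δ_{ii} − δ_{jj} ∈ ℤ). -/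
/-!
Read the indices `1, …, n` column by column along the Young diagram of the partition: the block
`(s_{k-1}, s_k]` is the `k`-th column. Then `δ` is the diagonal matrix equal to `c - k` on the
`k`-th block, so `ad δ` acts on `E_{ab}` by the difference of two such values, an integer. Since
`ν` is weakly decreasing, the rows `1, …, l` all reach column `k + 1` whenever row `l` does, so the
summand `E_{l + s_{k-1}, l + s_k}` of `t₊` joins the boxes of row `l` in columns `k` and `k + 1`
and has `δ`-weight `(c - k) - (c - (k + 1)) = 1`. Finally `tr δ = ∑ m_k (c - k)` vanishes
because `c` is the `m`-weighted mean of the column indices.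
-/

open Finset Matrix

section CommutatorWithDiagonal

variable {ι R : Type*} [Fintype ι] [DecidableEq ι] [CommRing R] {A : Matrix ι ι R}

theorem Matrix.IsDiag.commutator_apply (hA : A.IsDiag) (T : Matrix ι ι R) (a b : ι) :
    (A * T - T * A) a b = (A a a - A b b) * T a b := by
  conv_lhs => rw [← hA.diagonal_diag]
  simp only [sub_apply, diagonal_mul, mul_diagonal, diag_apply]
  ring

theorem Matrix.IsDiag.commutator_single (hA : A.IsDiag) (i j : ι) (x : R) :
    A * single i j x - single i j x * A = (A i i - A j j) • single i j x := by
  ext a b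
  rw [hA.commutator_apply, smul_apply, smul_eq_mul, single_apply]
  split_ifs with h
  · obtain ⟨rfl, rfl⟩ := h
    rfl
  · simp

theorem Matrix.IsDiag.commutator_eq_self {T : Matrix ι ι R} (hA : A.IsDiag)
    (hT : ∀ a b, T a b ≠ 0 → A a a - A b b = 1) : A * T - T * A = T := by
  ext a b
  rw [hA.commutator_apply]
  by_cases h : T a b = 0
  · simp [h]
  · rw [hT a b h, one_mul]

end CommutatorWithDiagonal

/-- The paper's `E_{pq}`: indices are `1`-based, and the matrix is zero when `p` or `q` is not
in `[1, n]`. -/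
def natSingle (R : Type*) [Zero R] [One R] (n p q : ℕ) : Matrix (Fin n) (Fin n) R :=
  of fun a b => if (a : ℕ) + 1 = p ∧ (b : ℕ) + 1 = q then 1 else 0

section NatSingle

variable {R : Type*} [Semiring R] {n : ℕ}

theorem isDiag_natSingle_self (p : ℕ) : (natSingle R n p p).IsDiag := by
  intro a b hab
  simp only [natSingle, of_apply, ite_eq_right_iff, and_imp]
  exact fun ha hb => absurd (Fin.ext (by omega)) hab

theorem trace_natSingle_self {p : ℕ} (hp : p ∈ Icc 1 n) : trace (natSingle R n p p) = 1 := by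
  obtain ⟨hp1, hpn⟩ := mem_Icc.1 hp
  have hiff : ∀ a : Fin n, (a : ℕ) + 1 = p ↔ a = ⟨p - 1, by omega⟩ := fun a => by
    simp only [Fin.ext_iff]
    omega
  simp [trace, natSingle, hiff]

theorem sum_Icc_smul_natSingle_apply_self (p k : ℕ) (w : R) (a : Fin n) :
    (∑ j ∈ Icc 1 k, w • natSingle R n (p + j) (p + j)) a a =
      if (a : ℕ) + 1 ∈ Ioc p (p + k) then w else 0 := by
  rw [← Icc_add_one_left_eq_Ioc, ← map_add_left_Icc 1 k p, ← sum_ite_eq _ _ fun _ => w, sum_map,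
    Matrix.sum_apply]
  simp [natSingle]

theorem exists_of_sum_natSingle_apply_ne_zero {κ : Type*} {S : Finset κ} {f g : κ → ℕ}
    {a b : Fin n} (h : (∑ x ∈ S, natSingle R n (f x) (g x)) a b ≠ 0) :
    ∃ x ∈ S, (a : ℕ) + 1 = f x ∧ (b : ℕ) + 1 = g x := by
  rw [Matrix.sum_apply] at h
  obtain ⟨x, hx, hne⟩ := exists_ne_zero_of_sum_ne_zero h
  by_contra! hcon
  exact hne (if_neg fun h' => hcon x hx h'.1 h'.2)

end NatSingle

section Blocks

variable {s : ℕ → ℕ}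

theorem eq_of_mem_Ioc_of_mem_Ioc (hs : Monotone s) {x k k' : ℕ}
    (hk : x ∈ Ioc (s (k - 1)) (s k)) (hk' : x ∈ Ioc (s (k' - 1)) (s k')) : k = k' := by
  rw [mem_Ioc] at hk hk'
  by_contra hne
  rcases Nat.lt_or_gt_of_ne hne with h | h
  · have := hs (show k ≤ k' - 1 by omega)
    omega
  · have := hs (show k' ≤ k - 1 by omega)
    omega

theorem exists_mem_Icc_mem_Ioc {x N : ℕ} (h0 : s 0 < x) (hN : x ≤ s N) :
    ∃ k ∈ Icc 1 N, x ∈ Ioc (s (k - 1)) (s k) := by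
  induction N with
  | zero => omega
  | succ N ih =>
    by_cases hx : x ≤ s N
    · obtain ⟨k, hk, hxk⟩ := ih hx
      exact ⟨k, Icc_subset_Icc_right N.le_succ hk, hxk⟩
    · exact ⟨N + 1, by simp, by simp only [mem_Ioc, Nat.add_sub_cancel]; omega⟩

theorem sum_Icc_ite_mem_Ioc {M : Type*} [AddCommMonoid M] (hs : Monotone s) {N k x : ℕ}
    (hk : k ∈ Icc 1 N) (hx : x ∈ Ioc (s (k - 1)) (s k)) (f : ℕ → M) :
    ∑ k' ∈ Icc 1 N, (if x ∈ Ioc (s (k' - 1)) (s k') then f k' else 0) = f k := by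
  rw [sum_eq_single_of_mem k hk fun k' _ hne =>
    if_neg fun h => hne (eq_of_mem_Ioc_of_mem_Ioc hs h hx), if_pos hx]

variable {m : ℕ → ℕ}

theorem monotone_of_eq_sum_Icc (hs : ∀ t, s t = ∑ k ∈ Icc 1 t, m k) : Monotone s :=
  fun a b hab => by simpa only [hs] using sum_le_sum_of_subset (Icc_subset_Icc_right hab)

theorem eq_add_of_eq_sum_Icc (hs : ∀ t, s t = ∑ k ∈ Icc 1 t, m k) {k : ℕ} (hk : 1 ≤ k) :
    s k = s (k - 1) + m k := by
  obtain ⟨t, rfl⟩ := Nat.exists_eq_add_of_le' hk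
  rw [hs, hs, sum_Icc_succ_top (by omega), Nat.add_sub_cancel]

end Blocks

def blockConstDiag (R : Type*) [Semiring R] (n N : ℕ) (m s : ℕ → ℕ) (w : ℕ → R) :
    Matrix (Fin n) (Fin n) R :=
  ∑ k ∈ Icc 1 N, ∑ j ∈ Icc 1 (m k), w k • natSingle R n (s (k - 1) + j) (s (k - 1) + j)

section BlockConstDiag

variable {R : Type*} [Semiring R] {n N : ℕ} {m s : ℕ → ℕ} {w : ℕ → R}

theorem isDiag_blockConstDiag : (blockConstDiag R n N m s w).IsDiag :=
  sum_induction _ IsDiag (fun _ _ => IsDiag.add) isDiag_zero fun _ _ =>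
    sum_induction _ IsDiag (fun _ _ => IsDiag.add) isDiag_zero fun _ _ =>
      (isDiag_natSingle_self _).smul _

theorem blockConstDiag_apply_self (hs : ∀ t, s t = ∑ k ∈ Icc 1 t, m k) {k : ℕ}
    (hk : k ∈ Icc 1 N) {a : Fin n} (ha : (a : ℕ) + 1 ∈ Ioc (s (k - 1)) (s k)) :
    blockConstDiag R n N m s w a a = w k := by
  rw [blockConstDiag, Matrix.sum_apply]
  simp_rw [sum_Icc_smul_natSingle_apply_self]
  rw [sum_congr rfl fun k' hk' => by rw [← eq_add_of_eq_sum_Icc hs (mem_Icc.1 hk').1]]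
  exact sum_Icc_ite_mem_Ioc (monotone_of_eq_sum_Icc hs) hk ha w

theorem trace_blockConstDiag (hs : ∀ t, s t = ∑ k ∈ Icc 1 t, m k) (hN : s N ≤ n) :
    trace (blockConstDiag R n N m s w) = ∑ k ∈ Icc 1 N, (m k : R) * w k := by
  rw [blockConstDiag, trace_sum]
  refine sum_congr rfl fun k hk => ?_
  have hk' := mem_Icc.1 hk
  have hsk : s k ≤ n := (monotone_of_eq_sum_Icc hs hk'.2).trans hN
  have hstep := eq_add_of_eq_sum_Icc hs hk'.1
  rw [trace_sum, sum_congr rfl fun j hj => by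
    rw [trace_smul, trace_natSingle_self (by simp at hj ⊢; omega), smul_eq_mul, mul_one]]
  simp

end BlockConstDiag

theorem sum_card_filter_le_eq_sum {ι : Type*} {S : Finset ι} {ν : ι → ℕ} {N : ℕ}
    (h : ∀ i ∈ S, ν i ≤ N) : ∑ k ∈ Icc 1 N, #{i ∈ S | k ≤ ν i} = ∑ i ∈ S, ν i := by
  simp_rw [card_filter]
  rw [sum_comm]
  refine sum_congr rfl fun i hi => ?_
  rw [← card_filter]
  have : {k ∈ Icc 1 N | k ≤ ν i} = Icc 1 (ν i) := by
    ext k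
    have := h i hi
    simp only [mem_filter, mem_Icc]
    omega
  simp [this]

theorem sum_mul_weightedMean_sub {ι K : Type*} [Field K] [CharZero K] (S : Finset ι)
    (w : ι → ℕ) (x : ι → K) :
    ∑ i ∈ S, (w i : K) * ((∑ j ∈ S, x j * w j) / (∑ j ∈ S, (w j : K)) - x i) = 0 := by
  by_cases hw : ∑ j ∈ S, (w j : K) = 0
  · have hw0 : ∀ i ∈ S, w i = 0 := sum_eq_zero_iff.1 (by exact_mod_cast hw)
    exact sum_eq_zero fun i hi => by simp [hw0 i hi]
  · rw [sum_congr rfl fun i _ => mul_sub _ _ _, sum_sub_distrib, ← sum_mul, mul_div_cancel₀ _ hw]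
    exact sub_eq_zero.2 (sum_congr rfl fun i _ => mul_comm _ _)

section Partition

variable {r : ℕ} {ν m s : ℕ → ℕ}

theorem le_apply_one_of_antitoneOn (hν : AntitoneOn ν (Icc 1 r)) {i : ℕ} (hi : i ∈ Icc 1 r) :
    ν i ≤ ν 1 :=
  hν (by simp at hi ⊢; omega) hi (mem_Icc.1 hi).1

theorem le_card_filter_le_of_antitoneOn {l k : ℕ} (hν : AntitoneOn ν (Icc 1 r))
    (hl : l ∈ Icc 1 r) (hk : k ≤ ν l) : l ≤ #{i ∈ Icc 1 r | k ≤ ν i} := by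
  have hsub : Icc 1 l ⊆ {i ∈ Icc 1 r | k ≤ ν i} := fun i hi => by
    have hir : i ∈ Icc 1 r := by simp at hi hl ⊢; omega
    exact mem_filter.2 ⟨hir, hk.trans (hν hir hl (mem_Icc.1 hi).2)⟩
  simpa using card_le_card hsub

theorem add_mem_Ioc_of_mem_Icc (hν : AntitoneOn ν (Icc 1 r))
    (hm : ∀ k, m k = #{i ∈ Icc 1 r | k ≤ ν i}) (hs : ∀ t, s t = ∑ k ∈ Icc 1 t, m k)
    {l k : ℕ} (hl : l ∈ Icc 1 r) (hk : k ∈ Icc 1 (ν l)) :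
    l + s (k - 1) ∈ Ioc (s (k - 1)) (s k) := by
  have hlk := le_card_filter_le_of_antitoneOn hν hl (mem_Icc.1 hk).2
  rw [mem_Ioc, eq_add_of_eq_sum_Icc hs (mem_Icc.1 hk).1, hm]
  have := (mem_Icc.1 hl).1
  omega

theorem blockConstDiag_apply_sub_apply_eq_one {R : Type*} [CommRing R] {n : ℕ} {c : R}
    (hν : AntitoneOn ν (Icc 1 r)) (hm : ∀ k, m k = #{i ∈ Icc 1 r | k ≤ ν i})
    (hs : ∀ t, s t = ∑ k ∈ Icc 1 t, m k) {l k : ℕ} (hl : l ∈ Icc 1 r) (hk : k ∈ Icc 1 (ν l - 1))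
    {a b : Fin n} (ha : (a : ℕ) + 1 = l + s (k - 1)) (hb : (b : ℕ) + 1 = l + s k) :
    blockConstDiag R n (ν 1) m s (fun k => c - k) a a -
      blockConstDiag R n (ν 1) m s (fun k => c - k) b b = 1 := by
  have hk' := mem_Icc.1 hk
  have hl1 := le_apply_one_of_antitoneOn hν hl
  have ha' := ha ▸ add_mem_Ioc_of_mem_Icc hν hm hs hl (by simp; omega)
  have hb' : (b : ℕ) + 1 ∈ Ioc (s (k + 1 - 1)) (s (k + 1)) :=
    hb ▸ add_mem_Ioc_of_mem_Icc hν hm hs hl (k := k + 1) (by simp; omega)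
  rw [blockConstDiag_apply_self hs (by simp; omega) ha',
    blockConstDiag_apply_self hs (by simp; omega) hb']
  push_cast
  ring

end Partition

theorem grading_element_of_partition_general
    (n r : ℕ) (ν : ℕ → ℕ)
    (hmono : ∀ i ∈ Finset.Icc 1 r, ∀ j ∈ Finset.Icc 1 r, i ≤ j → ν j ≤ ν i)
    (hsum : ∑ i ∈ Finset.Icc 1 r, ν i = n)
    (m : ℕ → ℕ) (hm : ∀ k, m k = ((Finset.Icc 1 r).filter (fun i => k ≤ ν i)).card)
    (s : ℕ → ℕ) (hs : ∀ t, s t = ∑ k ∈ Finset.Icc 1 t, m k)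
    (E : ℕ → ℕ → Matrix (Fin n) (Fin n) ℚ)
    (hE : ∀ i j, E i j =
      Matrix.of fun (a b : Fin n) => if (a : ℕ) + 1 = i ∧ (b : ℕ) + 1 = j then 1 else 0)
    (c : ℚ)
    (hc : c = (∑ l ∈ Finset.Icc 1 (ν 1), (l : ℚ) * (m l : ℚ)) /
        (∑ l ∈ Finset.Icc 1 (ν 1), (m l : ℚ)))
    (δ : Matrix (Fin n) (Fin n) ℚ)
    (hδ : δ = ∑ k ∈ Finset.Icc 1 (ν 1), ∑ j ∈ Finset.Icc 1 (m k),
        ((c - (k : ℚ)) • E (s (k - 1) + j) (s (k - 1) + j)))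
    (tp : Matrix (Fin n) (Fin n) ℚ)
    (htp : tp = ∑ l ∈ Finset.Icc 1 r, ∑ k ∈ Finset.Icc 1 (ν l - 1),
        E (l + s (k - 1)) (l + s k)) :
    δ * tp - tp * δ = tp ∧
    Matrix.trace δ = 0 ∧
    ∀ i j : Fin n, ∃ z : ℤ, δ i i - δ j j = (z : ℚ) ∧
      δ * Matrix.single i j 1 - Matrix.single i j 1 * δ
        = (δ i i - δ j j) • Matrix.single i j 1 := by
  obtain rfl : E = natSingle ℚ n := funext₂ hE
  replace hδ : δ = blockConstDiag ℚ n (ν 1) m s (fun k => c - k) := hδ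
  have hν : AntitoneOn ν (Icc 1 r) := fun i hi j hj => hmono i hi j hj
  have hsN : s (ν 1) = n := by
    rw [hs, ← hsum, ← sum_card_filter_le_eq_sum fun i => le_apply_one_of_antitoneOn hν]
    simp only [hm]
  have hδ_diag : δ.IsDiag := hδ ▸ isDiag_blockConstDiag
  have hδ_apply : ∀ (a : Fin n), ∀ k ∈ Icc 1 (ν 1), (a : ℕ) + 1 ∈ Ioc (s (k - 1)) (s k) →
      δ a a = c - k := fun a k hk ha => hδ ▸ blockConstDiag_apply_self hs hk ha
  refine ⟨hδ_diag.commutator_eq_self fun a b h => ?_, ?_, fun i j => ?_⟩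
  · obtain ⟨⟨l, k⟩, hlk, ha, hb⟩ :=
      exists_of_sum_natSingle_apply_ne_zero (by rwa [htp, sum_sigma'] at h)
    rw [mem_sigma] at hlk
    exact hδ ▸ blockConstDiag_apply_sub_apply_eq_one hν hm hs hlk.1 hlk.2 ha hb
  · rw [hδ, trace_blockConstDiag hs hsN.le, hc]
    exact sum_mul_weightedMean_sub _ m _
  · have hblock : ∀ a : Fin n, ∃ k ∈ Icc 1 (ν 1), (a : ℕ) + 1 ∈ Ioc (s (k - 1)) (s k) := fun a =>
      exists_mem_Icc_mem_Ioc (by simp [hs]) (hsN ▸ a.isLt)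
    obtain ⟨k, hk, hik⟩ := hblock i
    obtain ⟨k', hk', hjk⟩ := hblock j
    refine ⟨k' - k, ?_, hδ_diag.commutator_single i j 1⟩
    rw [hδ_apply i k hk hik, hδ_apply j k' hk' hjk]
    push_cast
    ring

/-- The grading element `δ` associated to a partition of `n`: it satisfies `[δ, t₊] = t₊`,
is traceless, and the differences of its diagonal entries are integers, so that the adjoint
action of `δ` has only integral eigenvalues on the elementary matrices:
`[δ, E_{ij}] = (δ_{ii} - δ_{jj}) E_{ij}` with `δ_{ii} - δ_{jj} ∈ ℤ`. -/
theorem grading_element_of_partition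
    (n r : ℕ) (hr : 0 < r) (ν : ℕ → ℕ)
    (hpos : ∀ i ∈ Finset.Icc 1 r, 0 < ν i)
    (hmono : ∀ i ∈ Finset.Icc 1 r, ∀ j ∈ Finset.Icc 1 r, i ≤ j → ν j ≤ ν i)
    (hsum : ∑ i ∈ Finset.Icc 1 r, ν i = n)
    (m : ℕ → ℕ) (hm : ∀ k, m k = ((Finset.Icc 1 r).filter (fun i => k ≤ ν i)).card)
    (s : ℕ → ℕ) (hs : ∀ t, s t = ∑ k ∈ Finset.Icc 1 t, m k)
    (E : ℕ → ℕ → Matrix (Fin n) (Fin n) ℚ)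
    (hE : ∀ i j, E i j =
      Matrix.of fun (a b : Fin n) => if (a : ℕ) + 1 = i ∧ (b : ℕ) + 1 = j then 1 else 0)
    (c : ℚ)
    (hc : c = (∑ l ∈ Finset.Icc 1 (ν 1), (l : ℚ) * (m l : ℚ)) /
        (∑ l ∈ Finset.Icc 1 (ν 1), (m l : ℚ)))
    (δ : Matrix (Fin n) (Fin n) ℚ)
    (hδ : δ = ∑ k ∈ Finset.Icc 1 (ν 1), ∑ j ∈ Finset.Icc 1 (m k),
        ((c - (k : ℚ)) • E (s (k - 1) + j) (s (k - 1) + j)))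
    (tp : Matrix (Fin n) (Fin n) ℚ)
    (htp : tp = ∑ l ∈ Finset.Icc 1 r, ∑ k ∈ Finset.Icc 1 (ν l - 1),
        E (l + s (k - 1)) (l + s k)) :
    δ * tp - tp * δ = tp ∧
    Matrix.trace δ = 0 ∧
    ∀ i j : Fin n, ∃ z : ℤ, δ i i - δ j j = (z : ℚ) ∧
      δ * Matrix.single i j 1 - Matrix.single i j 1 * δ
        = (δ i i - δ j j) • Matrix.single i j 1 :=
  grading_element_of_partition_general n r ν hmono hsum m hm s hs E hE c hc δ hδ tp htp
end

section
/- (Quantum Miura transformation for the finite W algebra W₃⁽²⁾.) Let A be an associative ℂ-algebra (with unit) containing elements e, f, h, s such that [h,e] = e, [h,f] = −f, [e,f] = 2h (where [a,b] = ab − ba), and s commutes with e, f and h. Define C = −(4/3)(h² + ½ef + ½fe) − (4/9)s² + (4/3)s − 1, H = 2h − (2/3)s + 1, E = −2(s − h − 1)e, F = (2/3)f. Then [H,E] = 2E, [H,F] = −2F, [E,F] = H² + C, and C commutes with each of H, E, F. -/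
/-!
Both sides of every relation are noncommutative polynomials in `e, f, h, s`. Rewriting
`h e = e h + e`, `f e = e f - 2 h`, `f h = h f + f` and moving the central `s` to the right
brings every word into the PBW order `e < h < f < s`, in which the two sides of `[H,E] = 2E`,
`[H,F] = -2F` and `[E,F] = H² + C` agree. Centrality of `C` is structural rather than
computational: up to a polynomial in `s`, `C` is `-2/3` times the quadratic Casimir
`2h² + ef + fe` of `sl₂`, which commutes with `e, f, h`, so `C` commutes with everything
built from `e, f, h, s`.
-/

structure Sl2Relations {A : Type*} [Ring A] (e f h : A) : Prop where
  lie_h_e : h * e - e * h = e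
  lie_h_f : h * f - f * h = -f
  lie_e_f : e * f - f * e = 2 * h

/-- Twice the usual Casimir `h² + (ef + fe)/2`, so that it makes sense over any ring. -/
def sl2Casimir {A : Type*} [Ring A] (e f h : A) : A := 2 * h ^ 2 + e * f + f * e

theorem commute_sl2Casimir {A : Type*} [Ring A] {e f h x : A}
    (he : Commute x e) (hf : Commute x f) (hh : Commute x h) :
    Commute x (sl2Casimir e f h) :=
  (((Commute.ofNat_right x 2).mul_right (hh.pow_right 2)).add_right (he.mul_right hf)).add_right
    (hf.mul_right he)

namespace Sl2Relations

variable {A : Type*} [Ring A] {e f h : A}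

theorem h_mul_e (hsl : Sl2Relations e f h) : h * e = e * h + e :=
  sub_eq_iff_eq_add'.mp hsl.lie_h_e

theorem f_mul_e (hsl : Sl2Relations e f h) : f * e = e * f - 2 * h := by
  rw [← hsl.lie_e_f, sub_sub_cancel]

theorem f_mul_h (hsl : Sl2Relations e f h) : f * h = h * f + f := by
  rw [← sub_eq_iff_eq_add', ← neg_sub, hsl.lie_h_f, neg_neg]

theorem h_mul_e_mul (hsl : Sl2Relations e f h) (x : A) :
    h * (e * x) = e * (h * x) + e * x := by
  rw [← mul_assoc, hsl.h_mul_e, add_mul, mul_assoc]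

theorem f_mul_e_mul (hsl : Sl2Relations e f h) (x : A) :
    f * (e * x) = e * (f * x) - 2 * (h * x) := by
  rw [← mul_assoc, hsl.f_mul_e, sub_mul, mul_assoc, mul_assoc]

theorem f_mul_h_mul (hsl : Sl2Relations e f h) (x : A) :
    f * (h * x) = h * (f * x) + f * x := by
  rw [← mul_assoc, hsl.f_mul_h, add_mul, mul_assoc]

theorem commute_sl2Casimir_e_f_h (hsl : Sl2Relations e f h) :
    Commute (sl2Casimir e f h) e ∧ Commute (sl2Casimir e f h) f ∧
      Commute (sl2Casimir e f h) h := by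
  refine ⟨?_, ?_, ?_⟩ <;>
  simp only [Commute, SemiconjBy, sl2Casimir, two_mul, pow_two, add_mul, mul_add, mul_assoc,
    sub_mul, mul_sub, hsl.h_mul_e, hsl.h_mul_e_mul, hsl.f_mul_e, hsl.f_mul_e_mul, hsl.f_mul_h,
    hsl.f_mul_h_mul] <;>
  noncomm_ring

end Sl2Relations

section Miura

variable (K : Type*) {A : Type*} [Field K] [Ring A] [Algebra K A]

def miuraH (h s : A) : A := 2 * h - (2/3 : K) • s + 1

def miuraE (e h s : A) : A := -(2 * ((s - h - 1) * e))

def miuraF (f : A) : A := (2/3 : K) • f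

def miuraC (e f h s : A) : A :=
  -((4/3 : K) • (h ^ 2 + (1/2 : K) • (e * f) + (1/2 : K) • (f * e)))
    - (4/9 : K) • s ^ 2 + (4/3 : K) • s - 1

variable {K} {e f h s : A}

theorem miuraC_eq_sl2Casimir [CharZero K] : miuraC K e f h s =
    -((2/3 : K) • sl2Casimir e f h) - (4/9 : K) • s ^ 2 + (4/3 : K) • s - 1 := by
  simp only [miuraC, sl2Casimir, two_mul, smul_add]
  module

theorem commute_miuraC [CharZero K] {x : A} (hx : Commute (sl2Casimir e f h) x)
    (hs : Commute s x) : Commute (miuraC K e f h s) x := by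
  rw [miuraC_eq_sl2Casimir]
  exact ((((hx.smul_left _).neg_left).sub_left ((hs.pow_left 2).smul_left _)).add_left
    (hs.smul_left _)).sub_left (Commute.one_left x)

theorem commute_miuraH {x : A} (hh : Commute x h) (hs : Commute x s) :
    Commute x (miuraH K h s) :=
  (((Commute.ofNat_right x 2).mul_right hh).sub_right (hs.smul_right _)).add_right
    (Commute.one_right x)

theorem commute_miuraE {x : A} (he : Commute x e) (hh : Commute x h) (hs : Commute x s) :
    Commute x (miuraE e h s) :=
  ((Commute.ofNat_right x 2).mul_right
    (((hs.sub_right hh).sub_right (Commute.one_right x)).mul_right he)).neg_right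

theorem commute_miuraF {x : A} (hf : Commute x f) : Commute x (miuraF K f) :=
  hf.smul_right _

theorem Sl2Relations.miura_W3_2_relations [CharZero K] (hsl : Sl2Relations e f h)
    (hse : Commute s e) (hsf : Commute s f) (hsh : Commute s h) :
    miuraH K h s * miuraE e h s - miuraE e h s * miuraH K h s = 2 * miuraE e h s ∧
    miuraH K h s * miuraF K f - miuraF K f * miuraH K h s = -(2 * miuraF K f) ∧
    miuraE e h s * miuraF K f - miuraF K f * miuraE e h s =
      miuraH K h s ^ 2 + miuraC K e f h s := by
  refine ⟨?_, ?_, ?_⟩ <;>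
  · simp only [miuraH, miuraE, miuraF, miuraC, two_mul, pow_two, add_mul, mul_add, mul_assoc,
      sub_mul, mul_sub, neg_mul, mul_neg, one_mul, mul_one, smul_mul_assoc, mul_smul_comm,
      smul_add, smul_sub, smul_neg, hsl.h_mul_e, hsl.h_mul_e_mul, hsl.f_mul_e, hsl.f_mul_e_mul,
      hsl.f_mul_h, hse.eq, hse.left_comm, hsf.eq, hsh.eq]
    module

end Miura

/-- Quantum Miura transformation for the finite W algebra `W₃⁽²⁾`: in any associative
`ℂ`-algebra containing `e, f, h, s` with `[h,e] = e`, `[h,f] = -f`, `[e,f] = 2h` and `s`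
central, the Miura transforms `C, H, E, F` satisfy the `W₃⁽²⁾` relations
`[H,E] = 2E`, `[H,F] = -2F`, `[E,F] = H² + C`, with `C` central. -/
theorem quantum_miura_W3_2
    (A : Type*) [Ring A] [Algebra ℂ A]
    (e f h s : A)
    (hhe : h * e - e * h = e)
    (hhf : h * f - f * h = -f)
    (hef : e * f - f * e = 2 * h)
    (hse : s * e = e * s) (hsf : s * f = f * s) (hsh : s * h = h * s)
    (C H E F : A)
    (hC : C = -((4/3 : ℂ) • (h ^ 2 + (1/2 : ℂ) • (e * f) + (1/2 : ℂ) • (f * e)))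
        - (4/9 : ℂ) • s ^ 2 + (4/3 : ℂ) • s - 1)
    (hH : H = 2 * h - (2/3 : ℂ) • s + 1)
    (hE : E = -(2 * ((s - h - 1) * e)))
    (hF : F = (2/3 : ℂ) • f) :
    H * E - E * H = 2 * E ∧
    H * F - F * H = -(2 * F) ∧
    E * F - F * E = H ^ 2 + C ∧
    C * H = H * C ∧ C * E = E * C ∧ C * F = F * C := by
  have hsl : Sl2Relations e f h := ⟨hhe, hhf, hef⟩
  obtain ⟨hΩe, hΩf, hΩh⟩ := hsl.commute_sl2Casimir_e_f_h
  have hsΩ : Commute s (sl2Casimir e f h) := commute_sl2Casimir hse hsf hsh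
  have hCe : Commute C e := hC ▸ commute_miuraC hΩe hse
  have hCf : Commute C f := hC ▸ commute_miuraC hΩf hsf
  have hCh : Commute C h := hC ▸ commute_miuraC hΩh hsh
  have hCs : Commute C s := hC ▸ commute_miuraC hsΩ.symm (Commute.refl s)
  obtain ⟨hHE, hHF, hEF⟩ := hsl.miura_W3_2_relations (K := ℂ) hse hsf hsh
  subst hC hH hE hF
  exact ⟨hHE, hHF, hEF, commute_miuraH hCh hCs, commute_miuraE hCe hCh hCs, commute_miuraF hCf⟩
end

section
/- (Fock realization of the finite W algebra W₃⁽²⁾.) Let λ, s ∈ ℂ and define the following ℂ-linear operators on ℂ[z], writing D = d/dz and Z = multiplication by z: H = (λ − (2/3)s + 1)·id − 2ZD, E = (2 − 2s + λ)·D − 2ZD², F = (2/3)(λZ − Z²D), and C = (−(1/3)λ² − (2/3)λ − (4/9)s² + (4/3)s − 1)·id. Then as operators on ℂ[z] they satisfy [H,E] = 2E, [H,F] = −2F, and [E,F] = H² + C, where [a,b] = ab − ba. -/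
/-!
Only the canonical commutation relation `D Z = Z D + 1` between `D = d/dz` and `Z = z·` enters.
Rewriting with `D (Z x) = Z (D x) + x` brings every product of the operators into normal order
(all `Z` to the left of all `D`); the normally ordered words `Zᵃ Dᵇ` are then compared coefficient
by coefficient, which is a commutative polynomial identity in `λ` and `s`.
-/

open Polynomial in
theorem Polynomial.derivative_mul_mulLeft_X {R : Type*} [CommSemiring R] :
    (derivative : Module.End R R[X]) * LinearMap.mulLeft R X
      = LinearMap.mulLeft R X * derivative + 1 := by
  refine LinearMap.ext fun p => ?_
  simp [derivative_mul, add_comm]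

theorem mul_mul_eq_of_mul_eq_mul_add_one {A : Type*} [Ring A] {D Z : A} (h : D * Z = Z * D + 1)
    (x : A) : D * (Z * x) = Z * (D * x) + x := by
  rw [← mul_assoc, h, add_mul, one_mul, mul_assoc]

namespace W32

variable {K A : Type*} [Field K] [Ring A] [Algebra K A]

def H (lam s : K) (D Z : A) : A := (lam - (2/3 : K) * s + 1) • (1 : A) - (2 : K) • (Z * D)

def E (lam s : K) (D Z : A) : A := (2 - 2 * s + lam) • D - (2 : K) • (Z * D * D)

def F (lam : K) (D Z : A) : A := (2/3 : K) • (lam • Z - Z * Z * D)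

def C (lam s : K) : A :=
  (-(1/3 : K) * lam ^ 2 - (2/3 : K) * lam - (4/9 : K) * s ^ 2 + (4/3 : K) * s - 1) • (1 : A)

variable (lam s : K) {D Z : A}

theorem commutator_H_E (h : D * Z = Z * D + 1) :
    H lam s D Z * E lam s D Z - E lam s D Z * H lam s D Z = 2 * E lam s D Z := by
  simp only [H, E, two_mul, mul_add, mul_sub, sub_mul, smul_mul_assoc, mul_smul_comm, mul_assoc,
    one_mul, mul_one, mul_mul_eq_of_mul_eq_mul_add_one h]
  module

theorem commutator_H_F (h : D * Z = Z * D + 1) :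
    H lam s D Z * F lam D Z - F lam D Z * H lam s D Z = -(2 * F lam D Z) := by
  simp only [H, F, two_mul, mul_add, mul_sub, sub_mul, smul_mul_assoc, mul_smul_comm, mul_assoc,
    one_mul, mul_one, h, mul_mul_eq_of_mul_eq_mul_add_one h]
  module

theorem commutator_E_F [CharZero K] (h : D * Z = Z * D + 1) :
    E lam s D Z * F lam D Z - F lam D Z * E lam s D Z = H lam s D Z ^ 2 + C lam s := by
  simp only [H, E, F, C, pow_two, mul_add, mul_sub, sub_mul, smul_mul_assoc, mul_smul_comm,
    mul_assoc, one_mul, mul_one, h, mul_mul_eq_of_mul_eq_mul_add_one h]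
  module

end W32

/-- Fock realization of the finite W algebra `W₃⁽²⁾` on `ℂ[z]`: the operators
`H = (λ - (2/3)s + 1)·id - 2ZD`, `E = (2 - 2s + λ)D - 2ZD²`, `F = (2/3)(λZ - Z²D)`,
`C = (-(1/3)λ² - (2/3)λ - (4/9)s² + (4/3)s - 1)·id`
satisfy `[H,E] = 2E`, `[H,F] = -2F`, `[E,F] = H² + C`. -/
theorem fock_realization_W3_2
    (lam s : ℂ)
    (D Z H E F C : Module.End ℂ (Polynomial ℂ))
    (hD : D = (Polynomial.derivative : Polynomial ℂ →ₗ[ℂ] Polynomial ℂ))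
    (hZ : Z = LinearMap.mulLeft ℂ (Polynomial.X : Polynomial ℂ))
    (hH : H = (lam - (2/3 : ℂ) * s + 1) • (1 : Module.End ℂ (Polynomial ℂ))
        - (2 : ℂ) • (Z * D))
    (hE : E = (2 - 2 * s + lam) • D - (2 : ℂ) • (Z * D * D))
    (hF : F = (2/3 : ℂ) • (lam • Z - Z * Z * D))
    (hC : C = (-(1/3 : ℂ) * lam ^ 2 - (2/3 : ℂ) * lam - (4/9 : ℂ) * s ^ 2
        + (4/3 : ℂ) * s - 1) • (1 : Module.End ℂ (Polynomial ℂ))) :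
    H * E - E * H = 2 * E ∧
    H * F - F * H = -(2 * F) ∧
    E * F - F * E = H ^ 2 + C := by
  have weyl : D * Z = Z * D + 1 := hD ▸ hZ ▸ Polynomial.derivative_mul_mulLeft_X
  obtain rfl : H = W32.H lam s D Z := hH
  obtain rfl : E = W32.E lam s D Z := hE
  obtain rfl : F = W32.F lam D Z := hF
  obtain rfl : C = W32.C lam s := hC
  exact ⟨W32.commutator_H_E lam s weyl, W32.commutator_H_F lam s weyl,
    W32.commutator_E_F lam s weyl⟩
end

section
/- Let d be a positive integer and s ∈ ℂ, and set λ = d − 1. Consider the Fock realization operators on ℂ[z], with D = d/dz and Z = multiplication by z: H = (λ − (2/3)s + 1)·id − 2ZD, E = (2 − 2s + λ)·D − 2ZD², F = (2/3)(λZ − Z²D). Then the d-dimensional subspace V = {P ∈ ℂ[z] : the d-th derivative of P is 0} (the polynomials of degree less than d) is invariant under H, E and F, so that V carries a d-dimensional representation of the finite W algebra W₃⁽²⁾. -/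
/-!
The space of polynomials of degree `< d` is the kernel of `D^d`. The operators `D` and `ZD`
do not raise the degree, hence neither do `H` and `E`. The operator `F` raises it by one,
but `λZ - Z²D` sends `z^k` to `(λ - k) z^(k+1)`, which vanishes exactly for `k = λ = d - 1`,
so the top monomial of the subspace is killed and `F` preserves it as well.
-/

open Polynomial

namespace Polynomial

variable {R : Type*}

theorem iterate_derivative_eq_zero_iff_degree_lt [CommRing R] [NoZeroSMulDivisors ℕ R]
    {p : R[X]} {k : ℕ} : derivative^[k] p = 0 ↔ p.degree < k := by
  refine ⟨fun h => ?_, iterate_derivative_eq_zero_of_degree_lt⟩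
  rw [degree_lt_iff_coeff_zero]
  intro m hm
  obtain ⟨n, rfl⟩ := Nat.exists_eq_add_of_le' hm
  have h_coeff := congrArg (coeff · n) h
  simp only [coeff_iterate_derivative, coeff_zero] at h_coeff
  exact (smul_eq_zero.1 h_coeff).resolve_left (by simp [Nat.descFactorial_eq_zero_iff_lt])

theorem coeff_X_mul_derivative [CommSemiring R] (p : R[X]) (n : ℕ) :
    (X * derivative p).coeff n = n * p.coeff n := by
  cases n with
  | zero => simp
  | succ n => rw [coeff_X_mul, coeff_derivative, mul_comm]; push_cast; rfl

theorem coeff_smul_X_mul_sub_X_mul_X_mul_derivative [CommRing R] (c : R) (p : R[X]) (n : ℕ) :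
    (c • (X * p) - X * (X * derivative p)).coeff (n + 1) = (c - n) * p.coeff n := by
  rw [coeff_sub, coeff_smul, coeff_X_mul, coeff_X_mul, coeff_X_mul_derivative, smul_eq_mul,
    sub_mul]

theorem derivative_mem_degreeLT [Semiring R] {p : R[X]} {d : ℕ} (hp : p ∈ degreeLT R d) :
    derivative p ∈ degreeLT R d :=
  mem_degreeLT.2 (degree_derivative_le.trans_lt (mem_degreeLT.1 hp))

theorem X_mul_derivative_mem_degreeLT [CommSemiring R] {p : R[X]} {d : ℕ}
    (hp : p ∈ degreeLT R d) : X * derivative p ∈ degreeLT R d := by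
  rw [mem_degreeLT, degree_lt_iff_coeff_zero] at hp ⊢
  intro m hm
  rw [coeff_X_mul_derivative, hp m hm, mul_zero]

theorem smul_X_mul_sub_X_mul_X_mul_derivative_mem_degreeLT [CommRing R] {p : R[X]} {d : ℕ}
    (hp : p ∈ degreeLT R d) :
    ((d : R) - 1) • (X * p) - X * (X * derivative p) ∈ degreeLT R d := by
  rw [mem_degreeLT, degree_lt_iff_coeff_zero] at hp ⊢
  intro m hm
  cases m with
  | zero => simp
  | succ n =>
    rw [coeff_smul_X_mul_sub_X_mul_X_mul_derivative]
    obtain rfl | hn := hm.eq_or_lt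
    · push_cast
      ring
    · rw [hp n (Nat.lt_succ_iff.mp hn), mul_zero]

end Polynomial

theorem fock_realization_W3_2_invariant_subspace_general
    (d : ℕ) (s : ℂ)
    (lam : ℂ) (hlam : lam = (d : ℂ) - 1)
    (D Z H E F : Module.End ℂ (Polynomial ℂ))
    (hD : D = (Polynomial.derivative : Polynomial ℂ →ₗ[ℂ] Polynomial ℂ))
    (hZ : Z = LinearMap.mulLeft ℂ (Polynomial.X : Polynomial ℂ))
    (hH : H = (lam - (2/3 : ℂ) * s + 1) • (1 : Module.End ℂ (Polynomial ℂ))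
        - (2 : ℂ) • (Z * D))
    (hE : E = (2 - 2 * s + lam) • D - (2 : ℂ) • (Z * D * D))
    (hF : F = (2/3 : ℂ) • (lam • Z - Z * Z * D)) :
    ∀ P : Polynomial ℂ, (D ^ d) P = 0 →
      (D ^ d) (H P) = 0 ∧ (D ^ d) (E P) = 0 ∧ (D ^ d) (F P) = 0 := by
  subst hD hZ hH hE hF hlam
  have kernel_eq : ∀ Q : ℂ[X], (derivative ^ d : Module.End ℂ ℂ[X]) Q = 0 ↔ Q ∈ degreeLT ℂ d :=
    fun Q => by rw [Module.End.pow_apply, iterate_derivative_eq_zero_iff_degree_lt, mem_degreeLT]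
  intro P hP
  rw [kernel_eq] at hP
  simp only [kernel_eq, LinearMap.sub_apply, LinearMap.smul_apply, Module.End.one_apply,
    Module.End.mul_apply, LinearMap.mulLeft_apply]
  have hDP := derivative_mem_degreeLT hP
  exact ⟨sub_mem (Submodule.smul_mem _ _ hP) (Submodule.smul_mem _ _ (X_mul_derivative_mem_degreeLT hP)),
    sub_mem (Submodule.smul_mem _ _ hDP) (Submodule.smul_mem _ _ (X_mul_derivative_mem_degreeLT hDP)),
    Submodule.smul_mem _ _ (smul_X_mul_sub_X_mul_X_mul_derivative_mem_degreeLT hP)⟩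

/-- The `d`-dimensional subspace `V = {P ∈ ℂ[z] : P⁽ᵈ⁾ = 0}` of polynomials of degree
less than `d` is invariant under the Fock realization operators `H`, `E`, `F` of the
finite W algebra `W₃⁽²⁾` with parameter `λ = d - 1`. -/
theorem fock_realization_W3_2_invariant_subspace
    (d : ℕ) (hd : 0 < d) (s : ℂ)
    (lam : ℂ) (hlam : lam = (d : ℂ) - 1)
    (D Z H E F : Module.End ℂ (Polynomial ℂ))
    (hD : D = (Polynomial.derivative : Polynomial ℂ →ₗ[ℂ] Polynomial ℂ))
    (hZ : Z = LinearMap.mulLeft ℂ (Polynomial.X : Polynomial ℂ))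
    (hH : H = (lam - (2/3 : ℂ) * s + 1) • (1 : Module.End ℂ (Polynomial ℂ))
        - (2 : ℂ) • (Z * D))
    (hE : E = (2 - 2 * s + lam) • D - (2 : ℂ) • (Z * D * D))
    (hF : F = (2/3 : ℂ) • (lam • Z - Z * Z * D)) :
    ∀ P : Polynomial ℂ, (D ^ d) P = 0 →
      (D ^ d) (H P) = 0 ∧ (D ^ d) (E P) = 0 ∧ (D ^ d) (F P) = 0 :=
  fock_realization_W3_2_invariant_subspace_general d s lam hlam D Z H E F hD hZ hH hE hF
end

section
/- For every positive integer d and every x ∈ ℂ there exists a d-dimensional representation of the finite W algebra W₃⁽²⁾ with central value c(d;x) = (1 − d²)/3 − x² and highest weight j(d;x) = d + x − 1; concretely, there exist matrices H, E, F ∈ M_d(ℂ) satisfying [H,E] = 2E, [H,F] = −2F, [E,F] = H² + c(d;x)·1 (with [a,b] = ab − ba), together with a nonzero vector v ∈ ℂ^d such that Ev = 0, Hv = (d + x − 1)v, and the smallest subspace of ℂ^d containing v and invariant under H, E, F is all of ℂ^d. -/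
/-!
On a basis `e₀, …, e_{d-1}` let `H e_k = (j - 2k) e_k`, `F e_k = e_{k+1}` and `E e_{k+1} = a_{k+1} e_k`,
`E e₀ = 0`, with `e_d = 0`. The relation `[E, F] = H² + c` on `e_k` says
`a_{k+1} - a_k = (j - 2k)² + c`, so `a_k = ∑_{i<k} ((j - 2i)² + c)`; cutting the module off at
dimension `d` is consistent exactly when `a_d = 0`, which is a polynomial identity for
`j = d + x - 1`, `c = (1 - d²)/3 - x²`. Cyclicity holds because `F` alone reaches every `e_k` from `e₀`.
-/

open Finset Matrix

namespace W3_2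

/-- The `n`-th standard basis vector, read as `0` once `n ≥ d`, so that the ladder operators act
by the same formula for every `n`. -/
def basisVec (d n : ℕ) : Fin d → ℂ := fun i => if (i : ℕ) = n then 1 else 0

def weightMatrix (d : ℕ) (j : ℂ) : Matrix (Fin d) (Fin d) ℂ :=
  diagonal fun i => j - 2 * (i : ℕ)

def lowering (d : ℕ) : Matrix (Fin d) (Fin d) ℂ :=
  of fun i k => if (i : ℕ) = k + 1 then 1 else 0

def raising (d : ℕ) (a : ℕ → ℂ) : Matrix (Fin d) (Fin d) ℂ :=
  of fun i k => if (i : ℕ) + 1 = k then a k else 0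

def weightSum (j c : ℂ) (n : ℕ) : ℂ := ∑ k ∈ range n, ((j - 2 * k) ^ 2 + c)

variable {d : ℕ}

lemma basisVec_val (i : Fin d) : basisVec d i = Pi.single i 1 := by
  funext k
  simp [basisVec, Pi.single_apply, Fin.ext_iff]

lemma basisVec_of_le {n : ℕ} (h : d ≤ n) : basisVec d n = 0 := by
  funext i
  simp only [basisVec, Pi.zero_apply, ite_eq_right_iff]
  omega

lemma mulVec_basisVec_apply (M : Matrix (Fin d) (Fin d) ℂ) (n : ℕ) (i : Fin d) :
    (M *ᵥ basisVec d n) i = if h : n < d then M i ⟨n, h⟩ else 0 := by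
  by_cases h : n < d
  · rw [dif_pos h, basisVec_val ⟨n, h⟩, mulVec_single_one, col_apply]
  · rw [dif_neg h, basisVec_of_le (not_lt.1 h), mulVec_zero, Pi.zero_apply]

lemma ext_of_mulVec_basisVec {M N : Matrix (Fin d) (Fin d) ℂ}
    (h : ∀ n < d, M *ᵥ basisVec d n = N *ᵥ basisVec d n) : M = N :=
  ext_of_mulVec_single fun i => by simpa only [basisVec_val] using h i i.isLt

lemma weightMatrix_mulVec_basisVec (j : ℂ) (n : ℕ) :
    weightMatrix d j *ᵥ basisVec d n = (j - 2 * n) • basisVec d n := by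
  funext i
  by_cases h : (i : ℕ) = n <;> simp [weightMatrix, basisVec, mulVec_diagonal, h]

lemma lowering_mulVec_basisVec (n : ℕ) :
    lowering d *ᵥ basisVec d n = basisVec d (n + 1) := by
  funext i
  rw [mulVec_basisVec_apply]
  by_cases h : n < d
  · simp [lowering, basisVec, h]
  · simp [basisVec, h]
    omega

lemma raising_mulVec_basisVec_zero (a : ℕ → ℂ) : raising d a *ᵥ basisVec d 0 = 0 := by
  funext i
  rw [mulVec_basisVec_apply]
  simp [raising]

lemma raising_mulVec_basisVec_succ {a : ℕ → ℂ} (ha : a d = 0) (n : ℕ) :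
    raising d a *ᵥ basisVec d (n + 1) = a (n + 1) • basisVec d n := by
  funext i
  rw [mulVec_basisVec_apply]
  by_cases h : n + 1 < d
  · simp [raising, basisVec, h]
  · obtain rfl | hlt := eq_or_lt_of_le (not_lt.1 h)
    · simp [basisVec, ha]
    · simp [basisVec, h]
      omega

lemma lowering_mulVec_raising_mulVec_basisVec {a : ℕ → ℂ} (ha₀ : a 0 = 0) (ha : a d = 0)
    (n : ℕ) : lowering d *ᵥ (raising d a *ᵥ basisVec d n) = a n • basisVec d n := by
  cases n with
  | zero => simp [raising_mulVec_basisVec_zero, ha₀]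
  | succ n =>
    rw [raising_mulVec_basisVec_succ ha, mulVec_smul, lowering_mulVec_basisVec]

lemma weightMatrix_mul_lowering_sub (j : ℂ) :
    weightMatrix d j * lowering d - lowering d * weightMatrix d j = -(2 * lowering d) := by
  refine ext_of_mulVec_basisVec fun n _ => ?_
  simp only [sub_mulVec, neg_mulVec, ← mulVec_mulVec, lowering_mulVec_basisVec,
    weightMatrix_mulVec_basisVec, mulVec_smul, two_mul, add_mulVec]
  push_cast
  module

lemma weightMatrix_mul_raising_sub (j : ℂ) {a : ℕ → ℂ} (ha : a d = 0) :
    weightMatrix d j * raising d a - raising d a * weightMatrix d j = 2 * raising d a := by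
  refine ext_of_mulVec_basisVec fun n _ => ?_
  cases n with
  | zero =>
    simp [sub_mulVec, ← mulVec_mulVec, raising_mulVec_basisVec_zero, weightMatrix_mulVec_basisVec,
      mulVec_smul]
  | succ n =>
    simp only [sub_mulVec, ← mulVec_mulVec, raising_mulVec_basisVec_succ ha,
      weightMatrix_mulVec_basisVec, mulVec_smul, two_mul, add_mulVec]
    push_cast
    module

lemma weightSum_succ_sub (j c : ℂ) (n : ℕ) :
    weightSum j c (n + 1) - weightSum j c n = (j - 2 * n) ^ 2 + c := by
  simp [weightSum, sum_range_succ]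

lemma raising_mul_lowering_sub (j c : ℂ) (h : weightSum j c d = 0) :
    raising d (weightSum j c) * lowering d - lowering d * raising d (weightSum j c) =
      weightMatrix d j ^ 2 + c • 1 := by
  refine ext_of_mulVec_basisVec fun n _ => ?_
  simp only [sub_mulVec, add_mulVec, ← mulVec_mulVec, lowering_mulVec_basisVec,
    raising_mulVec_basisVec_succ h, lowering_mulVec_raising_mulVec_basisVec (by simp [weightSum]) h,
    pow_two, weightMatrix_mulVec_basisVec, mulVec_smul, smul_mulVec, one_mulVec,
    ← sub_smul, weightSum_succ_sub, smul_smul, ← add_smul]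

lemma weightSum_eq (j c : ℂ) (n : ℕ) :
    weightSum j c n = n * (j ^ 2 + c) - 2 * j * n * (n - 1) + 2 / 3 * n * (n - 1) * (2 * n - 1) := by
  induction n with
  | zero => simp [weightSum]
  | succ n ih =>
    rw [← sub_add_cancel (weightSum j c (n + 1)) (weightSum j c n), weightSum_succ_sub, ih]
    push_cast
    ring

lemma weightSum_highestWeight_eq_zero (d : ℕ) (x : ℂ) :
    weightSum (d + x - 1) ((1 - d ^ 2) / 3 - x ^ 2) d = 0 := by
  rw [weightSum_eq]
  ring

lemma basisVec_mem_of_lowering_mem {W : Submodule ℂ (Fin d → ℂ)} (h₀ : basisVec d 0 ∈ W)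
    (hF : ∀ w ∈ W, lowering d *ᵥ w ∈ W) (n : ℕ) : basisVec d n ∈ W := by
  induction n with
  | zero => exact h₀
  | succ n ih => simpa only [lowering_mulVec_basisVec] using hF _ ih

lemma eq_top_of_lowering_mem {W : Submodule ℂ (Fin d → ℂ)} (h₀ : basisVec d 0 ∈ W)
    (hF : ∀ w ∈ W, lowering d *ᵥ w ∈ W) : W = ⊤ := by
  rw [eq_top_iff, ← (Pi.basisFun ℂ (Fin d)).span_eq, Submodule.span_le]
  rintro _ ⟨i, rfl⟩
  rw [Pi.basisFun_apply, ← basisVec_val]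
  exact basisVec_mem_of_lowering_mem h₀ hF i

lemma basisVec_ne_zero {n : ℕ} (h : n < d) : basisVec d n ≠ 0 := by
  intro h0
  simpa [basisVec] using congrFun h0 ⟨n, h⟩

end W3_2

open W3_2

/-- For every positive integer `d` and `x ∈ ℂ` there is a `d`-dimensional highest weight
representation of the finite W algebra `W₃⁽²⁾` with central value `c(d;x) = (1-d²)/3 - x²`
and highest weight `j(d;x) = d + x - 1`: matrices `H, E, F` satisfying the `W₃⁽²⁾`
relations together with a cyclic highest weight vector `v`. -/
theorem W3_2_highest_weight_representation
    (d : ℕ) (hd : 0 < d) (x : ℂ) :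
    ∃ (H E F : Matrix (Fin d) (Fin d) ℂ) (v : Fin d → ℂ),
      H * E - E * H = 2 * E ∧
      H * F - F * H = -(2 * F) ∧
      E * F - F * E = H ^ 2 + ((1 - (d : ℂ) ^ 2) / 3 - x ^ 2) • (1 : Matrix (Fin d) (Fin d) ℂ) ∧
      v ≠ 0 ∧
      E.mulVec v = 0 ∧
      H.mulVec v = ((d : ℂ) + x - 1) • v ∧
      ∀ W : Submodule ℂ (Fin d → ℂ), v ∈ W →
        (∀ w ∈ W, H.mulVec w ∈ W) →
        (∀ w ∈ W, E.mulVec w ∈ W) →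
        (∀ w ∈ W, F.mulVec w ∈ W) → W = ⊤ := by
  have hsum := weightSum_highestWeight_eq_zero d x
  refine ⟨weightMatrix d (d + x - 1), raising d (weightSum (d + x - 1) ((1 - d ^ 2) / 3 - x ^ 2)),
    lowering d, basisVec d 0, weightMatrix_mul_raising_sub _ hsum,
    weightMatrix_mul_lowering_sub _, raising_mul_lowering_sub _ _ hsum, basisVec_ne_zero hd,
    raising_mulVec_basisVec_zero _, ?_, fun W h₀ _ _ hF => eq_top_of_lowering_mem h₀ hF⟩
  simpa using weightMatrix_mulVec_basisVec (d := d) (d + x - 1) 0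
end

section
/- (Quantum Miura transformation for the finite W algebra of the partition 4 = 2 + 2.) Let A be an associative ℂ-algebra containing elements e₁, h₁, f₁, e₂, h₂, f₂, s such that [e₁,f₁] = h₁, [h₁,e₁] = 2e₁, [h₁,f₁] = −2f₁, similarly [e₂,f₂] = h₂, [h₂,e₂] = 2e₂, [h₂,f₂] = −2f₂, every element of {e₁,h₁,f₁} commutes with every element of {e₂,h₂,f₂}, and s commutes with all six (here [a,b] = ab − ba). Define H = ½(h₁+h₂), E = −e₁−e₂, F = −f₁−f₂, G⁺ = ½e₁h₂ − ½e₂h₁ + ¼s(e₁−e₂) + (e₁−e₂), G⁰ = f₁e₂ − f₂e₁ + ¼s(h₁−h₂) + (h₁−h₂), G⁻ = ½f₁h₂ − ½f₂h₁ − ¼s(f₁−f₂) − (f₁−f₂), and C = (⅛s² + s) + ½(e₁f₁+f₁e₁+e₂f₂+f₂e₂) + ¼(h₁²+h₂²). Then: [E,F] = 2H, [H,E] = E, [H,F] = −F, [E,G⁰] = 2G⁺, [E,G⁻] = G⁰, [F,G⁺] = G⁰, [F,G⁰] = 2G⁻, [H,G⁺] = G⁺, [H,G⁻] = −G⁻,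 [G⁰,G⁺] = −CE + EH² + ½EEF + ½EFE − 2E, [G⁰,G⁻] = −CF + FH² + ½FFE + ½FEF − 2F, [G⁺,G⁻] = −CH + H³ + ½HEF + ½HFE − 2H, and C commutes with H, E, F, G⁺, G⁰, G⁻. -/
/-!
Every relation is an identity in the subalgebra generated by `e₁, h₁, f₁, e₂, h₂, f₂, s`, so it
can be checked by bringing both sides to PBW normal form. Read as left-to-right rewriting rules,
the hypotheses already sort every product of two generators for the order
`f₂ < e₂ < h₂ < f₁ < e₁ < h₁ < s`, up to terms of lower degree; after normal ordering, the two
sides are compared as `ℂ`-linear combinations of ordered monomials.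
-/

/-- Both forms are needed as `simp` rules once products are associated to the right. -/
theorem mul_eq_and_mul_mul_eq {A : Type*} [Semigroup A] {a b c : A} (h : a * b = c) :
    a * b = c ∧ ∀ t, a * (b * t) = c * t :=
  ⟨h, fun t => by rw [← mul_assoc, h]⟩

set_option maxHeartbeats 4000000 in
/-- Quantum Miura transformation for the finite W algebra of the partition `4 = 2 + 2`:
inside any associative `ℂ`-algebra containing two commuting `sl₂` triples
`{e₁,h₁,f₁}`, `{e₂,h₂,f₂}` and a central element `s`, the Miura transforms
`H, E, F, G⁺, G⁰, G⁻, C` satisfy the defining relations of the finite W algebra. -/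
theorem quantum_miura_partition_2_2
    (A : Type*) [Ring A] [Algebra ℂ A]
    (e₁ h₁ f₁ e₂ h₂ f₂ s : A)
    (hef₁ : e₁ * f₁ - f₁ * e₁ = h₁)
    (hhe₁ : h₁ * e₁ - e₁ * h₁ = 2 * e₁)
    (hhf₁ : h₁ * f₁ - f₁ * h₁ = -(2 * f₁))
    (hef₂ : e₂ * f₂ - f₂ * e₂ = h₂)
    (hhe₂ : h₂ * e₂ - e₂ * h₂ = 2 * e₂)
    (hhf₂ : h₂ * f₂ - f₂ * h₂ = -(2 * f₂))
    (hcomm : ∀ a ∈ ({e₁, h₁, f₁} : Set A), ∀ b ∈ ({e₂, h₂, f₂} : Set A), a * b = b * a)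
    (hse₁ : s * e₁ = e₁ * s) (hsh₁ : s * h₁ = h₁ * s) (hsf₁ : s * f₁ = f₁ * s)
    (hse₂ : s * e₂ = e₂ * s) (hsh₂ : s * h₂ = h₂ * s) (hsf₂ : s * f₂ = f₂ * s)
    (H E F Gp G0 Gm C : A)
    (hH : H = (1/2 : ℂ) • (h₁ + h₂))
    (hE : E = -e₁ - e₂)
    (hF : F = -f₁ - f₂)
    (hGp : Gp = (1/2 : ℂ) • (e₁ * h₂) - (1/2 : ℂ) • (e₂ * h₁)
        + (1/4 : ℂ) • (s * (e₁ - e₂)) + (e₁ - e₂))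
    (hG0 : G0 = f₁ * e₂ - f₂ * e₁ + (1/4 : ℂ) • (s * (h₁ - h₂)) + (h₁ - h₂))
    (hGm : Gm = (1/2 : ℂ) • (f₁ * h₂) - (1/2 : ℂ) • (f₂ * h₁)
        - (1/4 : ℂ) • (s * (f₁ - f₂)) - (f₁ - f₂))
    (hC : C = ((1/8 : ℂ) • s ^ 2 + s)
        + (1/2 : ℂ) • (e₁ * f₁ + f₁ * e₁ + e₂ * f₂ + f₂ * e₂)
        + (1/4 : ℂ) • (h₁ ^ 2 + h₂ ^ 2)) :
    E * F - F * E = 2 * H ∧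
    H * E - E * H = E ∧
    H * F - F * H = -F ∧
    E * G0 - G0 * E = 2 * Gp ∧
    E * Gm - Gm * E = G0 ∧
    F * Gp - Gp * F = G0 ∧
    F * G0 - G0 * F = 2 * Gm ∧
    H * Gp - Gp * H = Gp ∧
    H * Gm - Gm * H = -Gm ∧
    G0 * Gp - Gp * G0 = -(C * E) + E * H ^ 2 + (1/2 : ℂ) • (E * E * F)
        + (1/2 : ℂ) • (E * F * E) - 2 * E ∧
    G0 * Gm - Gm * G0 = -(C * F) + F * H ^ 2 + (1/2 : ℂ) • (F * F * E)
        + (1/2 : ℂ) • (F * E * F) - 2 * F ∧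
    Gp * Gm - Gm * Gp = -(C * H) + H ^ 3 + (1/2 : ℂ) • (H * E * F)
        + (1/2 : ℂ) • (H * F * E) - 2 * H ∧
    C * H = H * C ∧ C * E = E * C ∧ C * F = F * C ∧
    C * Gp = Gp * C ∧ C * G0 = G0 * C ∧ C * Gm = Gm * C := by
  subst hH hE hF hGp hG0 hGm hC
  have sl2 {a b c : A} (h : a * b - b * a = c) :
      a * b = c + b * a ∧ ∀ t, a * (b * t) = (c + b * a) * t :=
    mul_eq_and_mul_mul_eq (sub_eq_iff_eq_add.mp h)
  have cross (a b : A) (ha : a ∈ ({e₁, h₁, f₁} : Set A)) (hb : b ∈ ({e₂, h₂, f₂} : Set A)) :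
      a * b = b * a ∧ ∀ t, a * (b * t) = b * a * t :=
    mul_eq_and_mul_mul_eq (hcomm a ha b hb)
  refine ⟨?_, ?_, ?_, ?_, ?_, ?_, ?_, ?_, ?_, ?_, ?_, ?_, ?_, ?_, ?_, ?_, ?_, ?_⟩ <;>
  · simp only [pow_succ, pow_zero, one_mul, two_mul, mul_add, add_mul, mul_sub, sub_mul,
      neg_mul, mul_neg, smul_add, smul_sub, smul_neg, smul_smul, smul_mul_assoc,
      mul_smul_comm, mul_assoc,
      sl2 hef₁, sl2 hhe₁, sl2 hhf₁, sl2 hef₂, sl2 hhe₂, sl2 hhf₂,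
      cross e₁ e₂ (by simp) (by simp), cross e₁ h₂ (by simp) (by simp),
      cross e₁ f₂ (by simp) (by simp), cross h₁ e₂ (by simp) (by simp),
      cross h₁ h₂ (by simp) (by simp), cross h₁ f₂ (by simp) (by simp),
      cross f₁ e₂ (by simp) (by simp), cross f₁ h₂ (by simp) (by simp),
      cross f₁ f₂ (by simp) (by simp),
      mul_eq_and_mul_mul_eq hse₁, mul_eq_and_mul_mul_eq hsh₁, mul_eq_and_mul_mul_eq hsf₁,
      mul_eq_and_mul_mul_eq hse₂, mul_eq_and_mul_mul_eq hsh₂, mul_eq_and_mul_mul_eq hsf₂]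
    module
end
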